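/- Representer Theorem: any minimizer f* of the regularized empirical risk J(f) = Σ_{i=1}^n L(y_i, f(x_i)) + λ‖f‖²_H over an RKHS H (with λ > 0) lies in the span of the kernel sections at the training points, i.e., f* = Σ_{i=1}^n α_i k(x_i, ·) for some real α_1,…,α_n. -/

import Mathlib

/-!
Projecting `f` orthogonally onto the span `K` of the kernel sections `k(xᵢ, ·)` leaves every
value `f(xᵢ) = ⟪f, k(xᵢ, ·)⟫` unchanged, while `‖P_K f‖ < ‖f‖` unless `f ∈ K`. Since `λ > 0`,
a minimizer outside `K` would be beaten by its own projection.
-/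

open Set

namespace Submodule

variable {𝕜 E : Type*} [RCLike 𝕜] [NormedAddCommGroup E] [InnerProductSpace 𝕜 E]

theorem inner_starProjection_left_of_mem (K : Submodule 𝕜 E) [K.HasOrthogonalProjection]
    (f : E) {v : E} (hv : v ∈ K) : inner 𝕜 (K.starProjection f) v = inner 𝕜 f v := by
  rw [inner_starProjection_left_eq_right, starProjection_eq_self_iff.mpr hv]

theorem mem_of_forall_le_add_mul_norm_sq (K : Submodule 𝕜 E) [K.HasOrthogonalProjection]
    {Φ : E → ℝ} (hΦ : ∀ f, Φ (K.starProjection f) ≤ Φ f) {lam : ℝ} (hlam : 0 < lam) {f₀ : E}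
    (hmin : ∀ f, Φ f₀ + lam * ‖f₀‖ ^ 2 ≤ Φ f + lam * ‖f‖ ^ 2) : f₀ ∈ K := by
  rw [K.mem_iff_norm_starProjection]
  refine le_antisymm (K.norm_starProjection_apply_le f₀) ?_
  have hproj := hmin (K.starProjection f₀)
  have hsq : ‖f₀‖ ^ 2 ≤ ‖K.starProjection f₀‖ ^ 2 :=
    le_of_mul_le_mul_left (by linarith [hΦ f₀]) hlam
  exact (pow_le_pow_iff_left₀ (norm_nonneg _) (norm_nonneg _) two_ne_zero).mp hsq

end Submodule

theorem representer_theorem_general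
    {X : Type*} {H : Type*} [NormedAddCommGroup H] [InnerProductSpace ℝ H]
    (ev : H → X → ℝ) (Ksec : X → H)
    (hrepr : ∀ (f : H) (x : X), ev f x = inner ℝ f (Ksec x))
    {n : ℕ} (x : Fin n → X) (y : Fin n → ℝ)
    (L : ℝ → ℝ → ℝ)
    (lam : ℝ) (hlam : 0 < lam)
    (fstar : H)
    (hmin : ∀ f : H,
      (∑ i, L (y i) (ev fstar (x i))) + lam * ‖fstar‖ ^ 2 ≤
      (∑ i, L (y i) (ev f (x i))) + lam * ‖f‖ ^ 2) :
    ∃ α : Fin n → ℝ, fstar = ∑ i, α i • Ksec (x i) := by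
  set K := Submodule.span ℝ (range fun i => Ksec (x i))
  have : FiniteDimensional ℝ K := FiniteDimensional.span_of_finite ℝ (finite_range _)
  have hfit (f : H) :
      ∑ i, L (y i) (ev (K.starProjection f) (x i)) = ∑ i, L (y i) (ev f (x i)) :=
    Finset.sum_congr rfl fun i _ => by
      rw [hrepr, hrepr, K.inner_starProjection_left_of_mem f (Submodule.subset_span ⟨i, rfl⟩)]
  have hmem : fstar ∈ K := K.mem_of_forall_le_add_mul_norm_sq
    (Φ := fun f => ∑ i, L (y i) (ev f (x i))) (fun f => (hfit f).le) hlam hmin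
  obtain ⟨α, hα⟩ := (Submodule.mem_span_range_iff_exists_fun ℝ).mp hmem
  exact ⟨α, hα.symm⟩

theorem representer_theorem
    {X : Type*} {H : Type*} [NormedAddCommGroup H] [InnerProductSpace ℝ H]
    [CompleteSpace H]
    (ev : H → X → ℝ) (Ksec : X → H)
    (hrepr : ∀ (f : H) (x : X), ev f x = inner ℝ f (Ksec x))
    {n : ℕ} (x : Fin n → X) (y : Fin n → ℝ)
    (L : ℝ → ℝ → ℝ) (hL : ∀ a b : ℝ, 0 ≤ L a b)
    (lam : ℝ) (hlam : 0 < lam)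
    (fstar : H)
    (hmin : ∀ f : H,
      (∑ i, L (y i) (ev fstar (x i))) + lam * ‖fstar‖ ^ 2 ≤
      (∑ i, L (y i) (ev f (x i))) + lam * ‖f‖ ^ 2) :
    ∃ α : Fin n → ℝ, fstar = ∑ i, α i • Ksec (x i) :=
  representer_theorem_general ev Ksec hrepr x y L lam hlam fstar hmin
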